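/- Let S be a finite set, β > 0, π_pre and p* probability distributions on S with full support, and π a probability distribution on S with full support. If for all x_A, x_B ∈ S, σ(log p*(x_A) − log p*(x_B)) = σ(β·log(π(x_A)/π_pre(x_A)) − β·log(π(x_B)/π_pre(x_B))), then π(x) ∝ π_pre(x) · p*(x)^{1/β}, i.e., there exists c > 0 with π(x) = c · π_pre(x) · p*(x)^{1/β} for all x ∈ S. -/

import Mathlib

noncomputable def sigm (t : ℝ) : ℝ := 1 / (1 + Real.exp (-t))

theorem sigm_strictMono : StrictMono sigm := fun s t hst =>
  one_div_lt_one_div_of_lt (by positivity) (by simpa using hst)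

theorem sigm_injective : Function.Injective sigm := sigm_strictMono.injective

open Real in
theorem exists_eq_const_mul_rpow_of_log_sub_eq {ι : Type*} [Nonempty ι] {β : ℝ} (hβ : β ≠ 0)
    {f g : ι → ℝ} (hf : ∀ i, 0 < f i) (hg : ∀ i, 0 < g i)
    (h : ∀ i j, log (f i) - log (f j) = β * log (g i) - β * log (g j)) :
    ∃ c, 0 < c ∧ ∀ i, g i = c * f i ^ (1 / β) := by
  obtain ⟨j⟩ := ‹Nonempty ι›
  have hfj := hf j
  refine ⟨g j / f j ^ (1 / β), div_pos (hg j) (rpow_pos_of_pos hfj _), fun i => ?_⟩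
  have hfi := hf i
  have hratio : g i / g j = (f i / f j) ^ (1 / β) := by
    refine log_injOn_pos (div_pos (hg i) (hg j)) (rpow_pos_of_pos (div_pos hfi hfj) _) ?_
    rw [log_rpow (div_pos hfi hfj), log_div hfi.ne' hfj.ne', log_div (hg i).ne' (hg j).ne',
      h i j]
    field_simp
  rw [div_rpow hfi.le hfj.le, div_eq_div_iff (hg j).ne' (rpow_pos_of_pos hfj _).ne'] at hratio
  field_simp
  linarith

theorem stmt_7_general {S : Type*} [Nonempty S]
    (β : ℝ) (hβ : 0 < β)
    (πpre pstar π : S → ℝ)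
    (hprepos : ∀ x, 0 < πpre x)
    (hppos : ∀ x, 0 < pstar x)
    (hπpos : ∀ x, 0 < π x)
    (h : ∀ xA xB : S,
      sigm (Real.log (pstar xA) - Real.log (pstar xB)) =
      sigm (β * Real.log (π xA / πpre xA) - β * Real.log (π xB / πpre xB))) :
    ∃ c : ℝ, 0 < c ∧ ∀ x : S, π x = c * πpre x * pstar x ^ (1 / β) := by
  obtain ⟨c, hc, hπ⟩ := exists_eq_const_mul_rpow_of_log_sub_eq hβ.ne' hppos
    (fun x => div_pos (hπpos x) (hprepos x)) (fun x y => sigm_injective (h x y))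
  refine ⟨c, hc, fun x => ?_⟩
  rw [mul_right_comm, ← hπ x, div_mul_cancel₀ _ (hprepos x).ne']

theorem stmt_7 {S : Type*} [Fintype S] [Nonempty S]
    (β : ℝ) (hβ : 0 < β)
    (πpre pstar π : S → ℝ)
    (hprepos : ∀ x, 0 < πpre x) (hpresum : ∑ x, πpre x = 1)
    (hppos : ∀ x, 0 < pstar x) (hpsum : ∑ x, pstar x = 1)
    (hπpos : ∀ x, 0 < π x) (hπsum : ∑ x, π x = 1)
    (h : ∀ xA xB : S,
      sigm (Real.log (pstar xA) - Real.log (pstar xB)) =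
      sigm (β * Real.log (π xA / πpre xA) - β * Real.log (π xB / πpre xB))) :
    ∃ c : ℝ, 0 < c ∧ ∀ x : S, π x = c * πpre x * pstar x ^ (1 / β) :=
  stmt_7_general β hβ πpre pstar π hprepos hppos hπpos h
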